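/- The composed best response map g(z) := B_1(B_2(z)) is a nondecreasing function from [0, q_1] to [0, q_1]: for all z₁, z₂ ∈ [0, q_1] with z₁ ≤ z₂, g(z₁) ≤ g(z₂); moreover g(z) ∈ [0, q_1] for every z ∈ [0, q_1]. -/

import Mathlib

/-!
For fixed `v ≥ 0` the cost difference `D(·, v)` is affine with positive slope
`Cf + Cb λ + ν v`, so minimizing `D(·, v)²` over `[0, q]` means getting as close as possible
to its zero: the best response is that zero clamped to `[0, q]`. The zero
`(Cf q − Cb μ v) / (Cf + Cb λ + ν v)` is a Möbius function of `v` with negative determinant,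
hence nonincreasing on `v ≥ 0`, and so is every best response. Composing the two nonincreasing
best responses gives a nondecreasing map.
-/

open Set

/-- The cost-difference function `D_i(u, v) = C_i^f·(q_i − u) − C^b·(λ_i·u + μ_i·v) − ν·u·v`. -/
noncomputable def Dfun (Cf Cb nu lam mu q u v : ℝ) : ℝ :=
  Cf * (q - u) - Cb * (lam * u + mu * v) - nu * u * v

/-- `b` is the best response for the player with parameters `(Cf, lam, mu, q)` to the
other flow `v`: a minimizer of `u ↦ D(u, v)²` over `[0, q]`. -/
def IsBestResponse (Cf Cb nu lam mu q v b : ℝ) : Prop :=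
  b ∈ Set.Icc (0 : ℝ) q ∧
    ∀ u ∈ Set.Icc (0 : ℝ) q,
      (Dfun Cf Cb nu lam mu q b v) ^ 2 ≤ (Dfun Cf Cb nu lam mu q u v) ^ 2

theorem eq_max_min_of_forall_abs_sub_le {l r c x : ℝ} (hx : x ∈ Icc l r)
    (hmin : ∀ u ∈ Icc l r, |c - x| ≤ |c - u|) : x = max l (min r c) := by
  have hlr : l ≤ r := hx.1.trans hx.2
  rcases le_or_gt c l with hcl | hlc
  · have h := hmin l ⟨le_rfl, hlr⟩
    rw [abs_of_nonpos (by linarith [hx.1]), abs_of_nonpos (by linarith)] at h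
    rw [min_eq_right (hcl.trans hlr), max_eq_left hcl]
    linarith [hx.1]
  rcases le_or_gt r c with hrc | hcr
  · have h := hmin r ⟨hlr, le_rfl⟩
    rw [abs_of_nonneg (by linarith [hx.2]), abs_of_nonneg (by linarith)] at h
    rw [min_eq_left hrc, max_eq_right hlr]
    linarith [hx.2]
  · have h := hmin c ⟨hlc.le, hcr.le⟩
    rw [sub_self, abs_zero, abs_nonpos_iff, sub_eq_zero] at h
    rw [min_eq_right hcr.le, max_eq_right hlc.le, h]

theorem eq_max_min_div_of_forall_sq_sub_mul_le {l r a s x : ℝ} (hs : 0 < s) (hx : x ∈ Icc l r)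
    (hmin : ∀ u ∈ Icc l r, (a - s * x) ^ 2 ≤ (a - s * u) ^ 2) :
    x = max l (min r (a / s)) := by
  refine eq_max_min_of_forall_abs_sub_le hx fun u hu => ?_
  have hfactor : ∀ y, a - s * y = s * (a / s - y) := fun y => by field_simp
  have h := hmin u hu
  rw [hfactor, hfactor, sq_le_sq, abs_mul, abs_mul, abs_of_pos hs] at h
  exact le_of_mul_le_mul_left h hs

theorem Dfun_eq_sub_mul (Cf Cb nu lam mu q u v : ℝ) :
    Dfun Cf Cb nu lam mu q u v = (Cf * q - Cb * mu * v) - (Cf + Cb * lam + nu * v) * u := by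
  unfold Dfun
  ring

/-- The zero of `u ↦ Dfun Cf Cb nu lam mu q u v`. -/
noncomputable def equalizingFlow (Cf Cb nu lam mu q v : ℝ) : ℝ :=
  (Cf * q - Cb * mu * v) / (Cf + Cb * lam + nu * v)

section

variable {Cf Cb nu lam mu q : ℝ}

theorem IsBestResponse.eq_max_min {v b : ℝ} (hb : IsBestResponse Cf Cb nu lam mu q v b)
    (hS : 0 < Cf + Cb * lam + nu * v) :
    b = max 0 (min q (equalizingFlow Cf Cb nu lam mu q v)) := by
  simp only [IsBestResponse, Dfun_eq_sub_mul] at hb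
  exact eq_max_min_div_of_forall_sq_sub_mul_le hS hb.1 hb.2

variable (hCf : 0 < Cf) (hCb : 0 ≤ Cb) (hnu : 0 ≤ nu) (hlam : 0 ≤ lam) (hmu : 0 ≤ mu)
  (hq : 0 ≤ q)
include hCf hCb hnu hlam hmu hq

theorem equalizingFlow_antitoneOn : AntitoneOn (equalizingFlow Cf Cb nu lam mu q) (Ici 0) := by
  intro v₁ (hv₁ : 0 ≤ v₁) v₂ (hv₂ : 0 ≤ v₂) hv
  have hS₁ : 0 < Cf + Cb * lam + nu * v₁ := by positivity
  have hS₂ : 0 < Cf + Cb * lam + nu * v₂ := by positivity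
  unfold equalizingFlow
  rw [div_le_div_iff₀ hS₂ hS₁, ← sub_nonneg]
  -- the `v₁ * v₂` terms cancel
  have hcross : (Cf * q - Cb * mu * v₁) * (Cf + Cb * lam + nu * v₂) -
      (Cf * q - Cb * mu * v₂) * (Cf + Cb * lam + nu * v₁) =
      (v₂ - v₁) * (Cb * mu * (Cf + Cb * lam) + Cf * q * nu) := by ring
  rw [hcross]
  have : 0 ≤ v₂ - v₁ := sub_nonneg.2 hv
  positivity

theorem IsBestResponse.antitone {v₁ v₂ b₁ b₂ : ℝ} (hv₁ : 0 ≤ v₁) (hv : v₁ ≤ v₂)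
    (hb₁ : IsBestResponse Cf Cb nu lam mu q v₁ b₁) (hb₂ : IsBestResponse Cf Cb nu lam mu q v₂ b₂) :
    b₂ ≤ b₁ := by
  have hS : ∀ v : ℝ, 0 ≤ v → 0 < Cf + Cb * lam + nu * v := fun v hv => by positivity
  have hv₂ : 0 ≤ v₂ := hv₁.trans hv
  rw [hb₁.eq_max_min (hS v₁ hv₁), hb₂.eq_max_min (hS v₂ hv₂)]
  exact max_le_max le_rfl <| min_le_min le_rfl <|
    equalizingFlow_antitoneOn hCf hCb hnu hlam hmu hq hv₁ hv₂ hv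

end

theorem composed_best_response_monotone_general
    (C1f C2f Cb nu lam1 lam2 mu1 mu2 q1 q2 : ℝ)
    (hC1f : 0 < C1f) (hC2f : 0 < C2f) (hCb : 0 < Cb) (hnu : 0 < nu)
    (hlam1 : 0 < lam1) (hlam2 : 0 < lam2)
    (hmu1 : 0 < mu1) (hmu2 : 0 < mu2)
    (hq1 : 0 ≤ q1) (hq2 : 0 ≤ q2) :
    (∀ z1 ∈ Set.Icc (0 : ℝ) q1, ∀ z2 ∈ Set.Icc (0 : ℝ) q1, z1 ≤ z2 →
      ∀ w1 w2 b1 b2 : ℝ,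
        IsBestResponse C2f Cb nu lam2 mu2 q2 z1 w1 →
        IsBestResponse C2f Cb nu lam2 mu2 q2 z2 w2 →
        IsBestResponse C1f Cb nu lam1 mu1 q1 w1 b1 →
        IsBestResponse C1f Cb nu lam1 mu1 q1 w2 b2 →
        b1 ≤ b2) ∧
    (∀ z ∈ Set.Icc (0 : ℝ) q1, ∀ w b : ℝ,
        IsBestResponse C2f Cb nu lam2 mu2 q2 z w →
        IsBestResponse C1f Cb nu lam1 mu1 q1 w b →
        b ∈ Set.Icc (0 : ℝ) q1) := by
  refine ⟨fun z1 hz1 z2 _ hz w1 w2 b1 b2 hw1 hw2 hb1 hb2 => ?_, fun _ _ _ _ _ hb => hb.1⟩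
  have hw : w2 ≤ w1 :=
    IsBestResponse.antitone hC2f hCb.le hnu.le hlam2.le hmu2.le hq2 hz1.1 hz hw1 hw2
  exact IsBestResponse.antitone hC1f hCb.le hnu.le hlam1.le hmu1.le hq1 hw2.1.1 hw hb2 hb1

/-- The composed best response map `g(z) := B₁(B₂(z))` is a nondecreasing
function from `[0, q₁]` to `[0, q₁]`: for `z₁ ≤ z₂` in `[0, q₁]` we have `g(z₁) ≤ g(z₂)`,
and moreover `g(z) ∈ [0, q₁]` for every `z ∈ [0, q₁]`. Here `B₂(z)` is the unique
minimizer of `u ↦ D₂(u, z)²` over `[0, q₂]` and `B₁(w)` is the unique minimizer of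
`u ↦ D₁(u, w)²` over `[0, q₁]`. -/
theorem composed_best_response_monotone
    (C1f C2f Cb nu lam1 lam2 mu1 mu2 q1 q2 : ℝ)
    (hC1f : 0 < C1f) (hC2f : 0 < C2f) (hCb : 0 < Cb) (hnu : 0 < nu)
    (hlam1 : 0 < lam1) (hlam1' : lam1 ≤ 1) (hlam2 : 0 < lam2) (hlam2' : lam2 ≤ 1)
    (hmu1 : 0 < mu1) (hmu1' : mu1 ≤ 1) (hmu2 : 0 < mu2) (hmu2' : mu2 ≤ 1)
    (hq1 : 0 ≤ q1) (hq2 : 0 ≤ q2) (hq : q1 + q2 = 1) :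
    (∀ z1 ∈ Set.Icc (0 : ℝ) q1, ∀ z2 ∈ Set.Icc (0 : ℝ) q1, z1 ≤ z2 →
      ∀ w1 w2 b1 b2 : ℝ,
        IsBestResponse C2f Cb nu lam2 mu2 q2 z1 w1 →
        IsBestResponse C2f Cb nu lam2 mu2 q2 z2 w2 →
        IsBestResponse C1f Cb nu lam1 mu1 q1 w1 b1 →
        IsBestResponse C1f Cb nu lam1 mu1 q1 w2 b2 →
        b1 ≤ b2) ∧
    (∀ z ∈ Set.Icc (0 : ℝ) q1, ∀ w b : ℝ,
        IsBestResponse C2f Cb nu lam2 mu2 q2 z w →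
        IsBestResponse C1f Cb nu lam1 mu1 q1 w b →
        b ∈ Set.Icc (0 : ℝ) q1) :=
  composed_best_response_monotone_general C1f C2f Cb nu lam1 lam2 mu1 mu2 q1 q2 hC1f hC2f hCb hnu
    hlam1 hlam2 hmu1 hmu2 hq1 hq2
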